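/- Let A_d ∈ ℝ^{n×n}, B ∈ ℝ^{n×p}, α_d ∈ ℝ^n, T ∈ ℕ with T ≥ 1, and suppose the linear map L : (ℝ^p)^T → ℝ^n given by L(ũ_0,…,ũ_{T−1}) := Σ_{j=0}^{T−1} G_{T−1−j} · B · ũ_j is NOT surjective. Then for every x₀ ∈ ℝ^n there exists x_d ∈ ℝ^n such that there is no pair of sequences ũ : ℕ → ℝ^p and x : ℕ → ℝ^n with x[0] = x₀ satisfying x[k+1] = Σ_{j=0}^{k} Ã_j · x[k−j] + B·ũ[k] for all k ∈ ℕ and x[T] = x_d. -/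
import Mathlib


/-- Grünwald–Letnikov weight: ψ(α,0) = 1 and ψ(α,j) = ∏_{m=1}^{j} (m−1−α)/m for j ≥ 1. -/
noncomputable def psi (α : ℝ) (j : ℕ) : ℝ :=
  ∏ m ∈ Finset.Icc 1 j, (((m : ℝ) - 1 - α) / (m : ℝ))

/-- Fractional difference: `fracDiff α x k = (Δ^α x)[k+1]`, componentwise. -/
noncomputable def fracDiff {n : ℕ} (α : Fin n → ℝ) (x : ℕ → Fin n → ℝ) (k : ℕ) :
    Fin n → ℝ :=
  fun i => x (k + 1) i + ∑ j ∈ Finset.range (k + 1), psi (α i) (j + 1) * x (k - j) i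

/-- Diagonal matrix D̃^{α,δα}_j with i-th entry ψ(α_i+δα_i,j) − ψ(α_i,j). -/
noncomputable def Dtil {n : ℕ} (α δα : Fin n → ℝ) (j : ℕ) : Matrix (Fin n) (Fin n) ℝ :=
  Matrix.diagonal fun i => psi (α i + δα i) j - psi (α i) j

/-- Diagonal matrix D̃^{0,α}_j with i-th entry ψ(α_i,j). -/
noncomputable def D0 {n : ℕ} (α : Fin n → ℝ) (j : ℕ) : Matrix (Fin n) (Fin n) ℝ :=
  Matrix.diagonal fun i => psi (α i) j

/-- Modified network matrices: Ã_0 = A_d − D̃^{0,α_d}_1, Ã_j = −D̃^{0,α_d}_{j+1} for j ≥ 1. -/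
noncomputable def Atil {n : ℕ} (Ad : Matrix (Fin n) (Fin n) ℝ) (αd : Fin n → ℝ) :
    ℕ → Matrix (Fin n) (Fin n) ℝ
  | 0 => Ad - D0 αd 1
  | j + 1 => -D0 αd (j + 2)

/-- Fractional state-transition matrices: G_0 = I, G_k = Σ_{j=0}^{k−1} Ã_j G_{k−1−j}. -/
noncomputable def Gmat {n : ℕ} (Ad : Matrix (Fin n) (Fin n) ℝ) (αd : Fin n → ℝ) :
    ℕ → Matrix (Fin n) (Fin n) ℝ
  | 0 => 1
  | k + 1 => ∑ j ∈ Finset.range (k + 1), Atil Ad αd j * Gmat Ad αd (k - j)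
  decreasing_by omega

lemma sum_mulVec' {n m : ℕ} {ι : Type*} (s : Finset ι) (A : ι → Matrix (Fin n) (Fin m) ℝ)
    (v : Fin m → ℝ) : (∑ i ∈ s, A i).mulVec v = ∑ i ∈ s, (A i).mulVec v := by
  induction s using Finset.cons_induction with
  | empty => simp [Matrix.mulVec]
  | cons a s ha ih => simp [Matrix.add_mulVec, ih]

lemma mulVec_sum' {n m : ℕ} {ι : Type*} (s : Finset ι) (A : Matrix (Fin n) (Fin m) ℝ)
    (v : ι → Fin m → ℝ) : A.mulVec (∑ i ∈ s, v i) = ∑ i ∈ s, A.mulVec (v i) := by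
  induction s using Finset.cons_induction with
  | empty => simp
  | cons a s ha ih => simp [Matrix.mulVec_add, ih]

lemma tri_swap {M : Type*} [AddCommMonoid M] (n : ℕ) (f : ℕ → ℕ → M) :
    ∑ j ∈ Finset.range n, ∑ i ∈ Finset.range (n - j), f j i
      = ∑ i ∈ Finset.range n, ∑ j ∈ Finset.range (n - i), f j i := by
  have key : ∀ g : ℕ → ℕ → M, ∑ j ∈ Finset.range n, ∑ i ∈ Finset.range (n - j), g j i
      = ∑ j ∈ Finset.range n, ∑ i ∈ Finset.range n, if j + i < n then g j i else 0 := by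
    intro g
    refine Finset.sum_congr rfl fun j hj => ?_
    rw [Finset.mem_range] at hj
    rw [← Finset.sum_subset (Finset.range_subset_range.2 (Nat.sub_le n j))
      (fun i hi his => by rw [Finset.mem_range] at hi his; rw [if_neg (by omega)])]
    refine Finset.sum_congr rfl fun i hi => ?_
    rw [Finset.mem_range] at hi
    rw [if_pos (by omega)]
  rw [key f, Finset.sum_comm, key fun i j => f j i]
  refine Finset.sum_congr rfl fun i _ => Finset.sum_congr rfl fun j _ => ?_
  rw [Nat.add_comm]

lemma Gmat_succ {n : ℕ} (Ad : Matrix (Fin n) (Fin n) ℝ) (αd : Fin n → ℝ) (k : ℕ) :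
    Gmat Ad αd (k + 1) = ∑ j ∈ Finset.range (k + 1), Atil Ad αd j * Gmat Ad αd (k - j) := by
  rw [Gmat]

lemma sol {n p : ℕ} (Ad : Matrix (Fin n) (Fin n) ℝ) (B : Matrix (Fin n) (Fin p) ℝ)
    (αd : Fin n → ℝ) (ut : ℕ → Fin p → ℝ) (x : ℕ → Fin n → ℝ)
    (hx : ∀ k, x (k + 1) =
      (∑ j ∈ Finset.range (k + 1), (Atil Ad αd j).mulVec (x (k - j))) + B.mulVec (ut k)) :
    ∀ k, x k = (Gmat Ad αd k).mulVec (x 0)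
      + ∑ j ∈ Finset.range k, (Gmat Ad αd (k - 1 - j)).mulVec (B.mulVec (ut j)) := by
  intro k
  induction k using Nat.strong_induction_on with
  | _ k ih =>
    match k with
    | 0 => simp [Gmat, Matrix.one_mulVec]
    | Nat.succ k =>
      rw [hx k]
      have hsub : ∀ j ∈ Finset.range (k + 1),
          (Atil Ad αd j).mulVec (x (k - j)) =
          (Atil Ad αd j * Gmat Ad αd (k - j)).mulVec (x 0)
            + ∑ i ∈ Finset.range (k - j),
              (Atil Ad αd j * Gmat Ad αd (k - j - 1 - i)).mulVec (B.mulVec (ut i)) := by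
        intro j hj
        rw [Finset.mem_range] at hj
        rw [ih (k - j) (by omega), Matrix.mulVec_add, Matrix.mulVec_mulVec,
          mulVec_sum']
        congr 1
        exact Finset.sum_congr rfl fun i _ => Matrix.mulVec_mulVec _ _ _
      rw [Finset.sum_congr rfl hsub, Finset.sum_add_distrib]
      have h1 : ∑ j ∈ Finset.range (k + 1),
          (Atil Ad αd j * Gmat Ad αd (k - j)).mulVec (x 0)
          = (Gmat Ad αd (k + 1)).mulVec (x 0) := by
        rw [Gmat_succ, sum_mulVec']
      have h2 : ∑ j ∈ Finset.range (k + 1), ∑ i ∈ Finset.range (k - j),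
          (Atil Ad αd j * Gmat Ad αd (k - j - 1 - i)).mulVec (B.mulVec (ut i))
          = ∑ i ∈ Finset.range k, (Gmat Ad αd (k - i)).mulVec (B.mulVec (ut i)) := by
        rw [Finset.sum_range_succ, Nat.sub_self, Finset.sum_range_zero, add_zero]
        rw [tri_swap]
        refine Finset.sum_congr rfl fun i hi => ?_
        rw [Finset.mem_range] at hi
        have hki : k - i = (k - i - 1) + 1 := by omega
        rw [hki, Gmat_succ, sum_mulVec']
        refine Finset.sum_congr rfl fun j _ => ?_
        have he : k - j - 1 - i = k - i - 1 - j := by omega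
        rw [he]
      have h3 : ∑ j ∈ Finset.range (k + 1),
          (Gmat Ad αd (k + 1 - 1 - j)).mulVec (B.mulVec (ut j))
          = (∑ j ∈ Finset.range k, (Gmat Ad αd (k - j)).mulVec (B.mulVec (ut j)))
            + B.mulVec (ut k) := by
        rw [Finset.sum_range_succ]
        congr 1
        rw [show k + 1 - 1 - k = 0 from by omega]
        rw [show Gmat Ad αd 0 = 1 by rw [Gmat], Matrix.one_mulVec]
      rw [h1, h2, h3, ← add_assoc]

/-- if the fractional reachability map is not surjective, some terminal state
is not reachable in T steps. -/
theorem stmt11 {n p : ℕ} (Ad : Matrix (Fin n) (Fin n) ℝ) (B : Matrix (Fin n) (Fin p) ℝ)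
    (αd : Fin n → ℝ) (T : ℕ) (hT : 1 ≤ T)
    (hL : ¬ Function.Surjective fun us : Fin T → Fin p → ℝ =>
      ∑ j : Fin T, (Gmat Ad αd (T - 1 - (j : ℕ))).mulVec (B.mulVec (us j))) :
    ∀ x0 : Fin n → ℝ, ∃ xd : Fin n → ℝ,
      ¬ ∃ (ut : ℕ → Fin p → ℝ) (x : ℕ → Fin n → ℝ),
        x 0 = x0 ∧
        (∀ k, x (k + 1) =
          (∑ j ∈ Finset.range (k + 1), (Atil Ad αd j).mulVec (x (k - j))) + B.mulVec (ut k)) ∧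
        x T = xd := by
  intro x0
  rw [Function.Surjective] at hL
  push_neg at hL
  obtain ⟨v, hv⟩ := hL
  refine ⟨(Gmat Ad αd T).mulVec x0 + v, ?_⟩
  rintro ⟨ut, x, hx0, hrec, hxT⟩
  have hs := sol Ad B αd ut x hrec T
  rw [hx0, hxT] at hs
  apply hv (fun j : Fin T => ut j)
  rw [Fin.sum_univ_eq_sum_range
    (fun j => (Gmat Ad αd (T - 1 - j)).mulVec (B.mulVec (ut j))) T]
  exact (add_left_cancel hs.symm)
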